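/- Let m ≥ 2, let Δ be a flag (2m−1)-dimensional pseudomanifold, and let σ be a facet of Δ. Then Σ_{v∈σ} f₀(lk({v},Δ)) = |∪_{v∈σ} V(lk({v},Δ))| + 4m + (2m−3)·|∪_{δ⊆σ, |δ|=2m−2} V(lk(δ,Δ))| + Σ_{i=2}^{2m−3} (i−1)·b_i. -/

import Mathlib

open Finset

variable {V : Type*} [DecidableEq V]

/-- A simplicial complex on (a subset of) the vertex type `V`: a collection of
finite sets (the faces) that contains the empty set and is closed under inclusion. -/
def IsComplex (Δ : Finset (Finset V)) : Prop :=
  ∅ ∈ Δ ∧ ∀ σ ∈ Δ, ∀ τ ⊆ σ, τ ∈ Δ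

/-- The vertex set `V(Δ)` of a complex. -/
def verts (Δ : Finset (Finset V)) : Finset V := Δ.sup id

/-- The link `lk(σ,Δ) = {τ ∈ Δ : τ ∩ σ = ∅ ∧ τ ∪ σ ∈ Δ}`. -/
def link (Δ : Finset (Finset V)) (σ : Finset V) : Finset (Finset V) :=
  Δ.filter fun τ => τ ∩ σ = ∅ ∧ τ ∪ σ ∈ Δ

/-- The induced subcomplex `Δ[W] = {σ ∈ Δ : σ ⊆ W}`. -/
def induced (Δ : Finset (Finset V)) (W : Finset V) : Finset (Finset V) :=
  Δ.filter fun σ => σ ⊆ W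

/-- `fNum Δ i` is the number `f_i(Δ)` of `i`-dimensional faces of `Δ`,
i.e. of faces of cardinality `i + 1`. -/
def fNum (Δ : Finset (Finset V)) (i : ℕ) : ℕ :=
  (Δ.filter fun σ => σ.card = i + 1).card

/-- `Δ` is flag: every set of vertices all of whose two-element subsets are
faces of `Δ` is itself a face of `Δ`.  (Taking `u = v` below, this in particular
requires each member of `S` to be a vertex of `Δ`.) -/
def IsFlag (Δ : Finset (Finset V)) : Prop :=
  ∀ S : Finset V, (∀ u ∈ S, ∀ v ∈ S, ({u, v} : Finset V) ∈ Δ) → S ∈ Δ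

/-- A facet: an inclusion-maximal face. -/
def IsFacet (Δ : Finset (Finset V)) (σ : Finset V) : Prop :=
  σ ∈ Δ ∧ ∀ τ ∈ Δ, σ ⊆ τ → τ = σ

/-- A `(d-1)`-dimensional pseudomanifold: a pure `(d-1)`-dimensional complex
(all facets have cardinality `d`) in which every `(d-2)`-dimensional face
(cardinality `d-1`) is contained in exactly two facets (= faces of cardinality `d`). -/
def IsPseudomanifold (Δ : Finset (Finset V)) (d : ℕ) : Prop :=
  IsComplex Δ ∧ (∀ σ, IsFacet Δ σ → σ.card = d) ∧
    ∀ τ ∈ Δ, τ.card = d - 1 → (Δ.filter fun σ => σ.card = d ∧ τ ⊆ σ).card = 2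

/-- The 1-skeleton graph of a complex. -/
def skGraph (Δ : Finset (Finset V)) : SimpleGraph V where
  Adj u v := u ≠ v ∧ ({u, v} : Finset V) ∈ Δ
  symm := ⟨fun u v h => ⟨h.1.symm, by rw [Finset.pair_comm]; exact h.2⟩⟩
  loopless := ⟨fun u h => h.1 rfl⟩

/-- The 1-skeleton graph, restricted to the vertex set of `Δ`, is connected. -/
def ConnOn (Δ : Finset (Finset V)) : Prop :=
  ((skGraph Δ).induce (verts Δ : Set V)).Connected

/-- A normal `(d-1)`-pseudomanifold: the 1-skeleton is connected and the
1-skeleton of the link of each face of dimension at most `d-3`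
(cardinality at most `d-2`) is connected. -/
def IsNormalPseudomanifold (Δ : Finset (Finset V)) (d : ℕ) : Prop :=
  IsPseudomanifold Δ d ∧ ConnOn Δ ∧
    ∀ σ ∈ Δ, σ.card + 2 ≤ d → ConnOn (link Δ σ)

/-- A circle (cycle): a connected 1-dimensional pseudomanifold. -/
def IsCircle (Δ : Finset (Finset V)) : Prop :=
  IsPseudomanifold Δ 2 ∧ ConnOn Δ

/-- The 0-dimensional complex consisting of two disjoint vertices. -/
def IsTwoPoints (P : Finset (Finset V)) : Prop :=
  ∃ a b : V, a ≠ b ∧ P = {∅, {a}, {b}}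

/-- The join of two complexes (on disjoint vertex sets): faces `σ ∪ τ`
with `σ ∈ Δ`, `τ ∈ Γ`. -/
def join (Δ Γ : Finset (Finset V)) : Finset (Finset V) :=
  (Δ ×ˢ Γ).image fun p => p.1 ∪ p.2

/-- `Δ` is the suspension of a circle: the join of a circle with two disjoint points. -/
def IsSuspensionOfCircle (Δ : Finset (Finset V)) : Prop :=
  ∃ C P, IsCircle C ∧ IsTwoPoints P ∧ Disjoint (verts C) (verts P) ∧ Δ = join C P

/-- Iterated join of a family of complexes. -/
def joinFam : (m : ℕ) → (Fin m → Finset (Finset V)) → Finset (Finset V)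
  | 0, _ => {∅}
  | m + 1, C => join (C 0) (joinFam m fun i => C i.succ)

/-- `Δ` is the join of `m` circles (on pairwise disjoint vertex sets). -/
def IsJoinOfCircles (Δ : Finset (Finset V)) (m : ℕ) : Prop :=
  ∃ C : Fin m → Finset (Finset V), (∀ i, IsCircle (C i)) ∧
    (∀ i j, i ≠ j → Disjoint (verts (C i)) (verts (C j))) ∧ Δ = joinFam m C

/-- `a_k = Σ_{τ ⊆ σ, |τ| = k} f₀(lk(τ,Δ))`. -/
def aNum (Δ : Finset (Finset V)) (σ : Finset V) (k : ℕ) : ℕ :=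
  ∑ τ ∈ σ.powersetCard k, fNum (link Δ τ) 0

/-- `W_τ`: the vertices `w` of `lk(τ,Δ)` with `{w,u} ∉ Δ` for every `u ∈ σ \ τ`. -/
def Wset (Δ : Finset (Finset V)) (σ τ : Finset V) : Finset V :=
  (verts (link Δ τ)).filter fun w => ∀ u ∈ σ \ τ, ({w, u} : Finset V) ∉ Δ

/-- `b_k = Σ_{τ ⊆ σ, |τ| = k} |W_τ|`. -/
def bNum (Δ : Finset (Finset V)) (σ : Finset V) (k : ℕ) : ℕ :=
  ∑ τ ∈ σ.powersetCard k, (Wset Δ σ τ).card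

/-- The Euler characteristic `χ(Δ) = Σ_{i ≥ 0} (-1)^i f_i(Δ)`, computed as a sum
of `(-1)^{|σ|-1}` over the nonempty faces `σ`. -/
def eulerChar (Δ : Finset (Finset V)) : ℤ :=
  ∑ σ ∈ Δ.filter (fun σ => σ ≠ ∅), (-1 : ℤ) ^ (σ.card - 1)

/-- `Δ` is Eulerian: for every face `σ` (including `σ = ∅`, whose link is `Δ`),
`χ(lk(σ,Δ)) = 1 + (-1)^{dim lk(σ,Δ)}`; since `dim lk(σ,Δ)` is one less than the
maximal cardinality of a face of the link, this equals `1 - (-1)^{max card}`. -/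
def IsEulerian (Δ : Finset (Finset V)) : Prop :=
  ∀ σ ∈ Δ, eulerChar (link Δ σ) = 1 - (-1) ^ ((link Δ σ).sup Finset.card)

/-! Write `N(w)` for the set of vertices of the facet `σ` adjacent to `w`. Counting the pairs
`(v, w)` with `v ∈ σ` and `w` a vertex of `lk v` gives `Σ_{v ∈ σ} f₀(lk v) = Σ_w |N(w)|`, where
`N(w) = σ ∖ {w}` for `w ∈ σ`. By flagness an outer vertex `w ∉ σ` spans a face with `N(w)`, so
`|N(w)| < |σ|` because `σ` is a facet, and `W_τ` consists exactly of the outer vertices with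
`N(w) = τ`: `b_k` counts the outer vertices with `|N(w)| = k`. Likewise the vertices of the links
of the `k`-subsets of `σ` are `σ` together with the outer vertices with `|N(w)| ≥ k`. Each ridge
of `σ` lies in exactly one other facet, so `b_{d-1} = d` for `d = |σ|`, and the formula is a
rearrangement of these counts. -/

def neighborsIn (Δ : Finset (Finset V)) (σ : Finset V) (w : V) : Finset V :=
  σ.filter fun v => v ≠ w ∧ ({w, v} : Finset V) ∈ Δ

section

variable {Δ : Finset (Finset V)} {σ τ : Finset V} {w : V}

lemma mem_verts : w ∈ verts Δ ↔ ∃ ρ ∈ Δ, w ∈ ρ := by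
  simp [verts, mem_sup]

lemma singleton_mem_link (hC : IsComplex Δ) : {w} ∈ link Δ τ ↔ w ∉ τ ∧ insert w τ ∈ Δ := by
  rw [link, mem_filter, ← insert_eq, ← disjoint_iff_inter_eq_empty,
    disjoint_singleton_left]
  exact ⟨fun h => ⟨h.2.1, h.2.2⟩, fun h => ⟨hC.2 _ h.2 _ (by simp), h⟩⟩

lemma mem_verts_link (hC : IsComplex Δ) : w ∈ verts (link Δ τ) ↔ w ∉ τ ∧ insert w τ ∈ Δ := by
  refine ⟨fun hw => ?_, fun h => mem_verts.2 ⟨_, (singleton_mem_link hC).2 h, mem_singleton_self w⟩⟩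
  obtain ⟨ρ, hρ, hwρ⟩ := mem_verts.1 hw
  obtain ⟨-, hρτ, hρ⟩ := mem_filter.1 hρ
  refine ⟨fun hwτ => ?_, hC.2 _ hρ _ (insert_subset (by simp [hwρ]) subset_union_right)⟩
  simpa [hρτ] using mem_inter.2 ⟨hwρ, hwτ⟩

lemma fNum_link_zero (hC : IsComplex Δ) (τ : Finset V) :
    fNum (link Δ τ) 0 = (verts (link Δ τ)).card := by
  refine (card_bij (fun w _ => {w}) (fun w hw => ?_) (fun _ _ _ _ => singleton_inj.1)
    fun ρ hρ => ?_).symm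
  · exact mem_filter.2 ⟨(singleton_mem_link hC).2 ((mem_verts_link hC).1 hw),
      card_singleton w⟩
  · obtain ⟨hρ, hcard⟩ := mem_filter.1 hρ
    obtain ⟨w, rfl⟩ := card_eq_one.1 hcard
    exact ⟨w, mem_verts.2 ⟨_, hρ, mem_singleton_self w⟩, rfl⟩

@[simp]
lemma mem_neighborsIn {v : V} : v ∈ neighborsIn Δ σ w ↔ v ∈ σ ∧ v ≠ w ∧ ({w, v} : Finset V) ∈ Δ :=
  mem_filter

lemma neighborsIn_subset : neighborsIn Δ σ w ⊆ σ := filter_subset _ _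

lemma neighborsIn_of_mem (hC : IsComplex Δ) (hσ : σ ∈ Δ) (hw : w ∈ σ) :
    neighborsIn Δ σ w = σ.erase w := by
  ext v
  simp only [mem_neighborsIn, mem_erase]
  exact ⟨fun h => ⟨h.2.1, h.1⟩, fun h => ⟨h.2, h.1, hC.2 σ hσ _ (insert_subset hw
    (singleton_subset_iff.2 h.2))⟩⟩

lemma IsFlag.insert_mem (hF : IsFlag Δ) (hC : IsComplex Δ) (hτ : τ ∈ Δ) (hw : {w} ∈ Δ)
    (h : ∀ v ∈ τ, ({w, v} : Finset V) ∈ Δ) : insert w τ ∈ Δ := by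
  refine hF _ fun u hu v hv => ?_
  rw [mem_insert] at hu hv
  rcases hu with rfl | hu <;> rcases hv with rfl | hv
  · rwa [pair_eq_singleton]
  · exact h v hv
  · rw [pair_comm]; exact h u hu
  · exact hC.2 τ hτ _ (insert_subset hu (singleton_subset_iff.2 hv))

lemma insert_neighborsIn_mem (hF : IsFlag Δ) (hC : IsComplex Δ) (hσ : σ ∈ Δ)
    (hN : (neighborsIn Δ σ w).Nonempty) : insert w (neighborsIn Δ σ w) ∈ Δ := by
  obtain ⟨v, hv⟩ := hN
  exact hF.insert_mem hC (hC.2 σ hσ _ neighborsIn_subset)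
    (hC.2 _ (mem_neighborsIn.1 hv).2.2 _ (by simp)) fun u hu => (mem_neighborsIn.1 hu).2.2

lemma card_neighborsIn_lt (hF : IsFlag Δ) (hC : IsComplex Δ) (hσ : IsFacet Δ σ) (hw : w ∉ σ)
    (hN : (neighborsIn Δ σ w).Nonempty) : (neighborsIn Δ σ w).card < σ.card := by
  refine card_lt_card (Finset.ssubset_iff_subset_ne.2 ⟨neighborsIn_subset, fun h => hw ?_⟩)
  have hins := hσ.2 _ (insert_neighborsIn_mem hF hC hσ.1 hN) (by rw [h]; exact subset_insert _ _)
  rw [← hins, h]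
  exact mem_insert_self w σ

lemma mem_Wset_iff (hF : IsFlag Δ) (hC : IsComplex Δ) (hσ : σ ∈ Δ) (hτσ : τ ⊆ σ)
    (hτ : τ.Nonempty) : w ∈ Wset Δ σ τ ↔ w ∉ σ ∧ neighborsIn Δ σ w = τ := by
  rw [Wset, mem_filter, mem_verts_link hC]
  constructor
  · rintro ⟨⟨hwτ, hins⟩, hW⟩
    have hwσ : w ∉ σ := fun hwσ => hW w (mem_sdiff.2 ⟨hwσ, hwτ⟩)
      (by rw [pair_eq_singleton]; exact hC.2 _ hins _ (by simp))
    refine ⟨hwσ, ext fun v => ⟨fun hv => ?_, fun hv => ?_⟩⟩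
    · obtain ⟨hvσ, -, hwv⟩ := mem_neighborsIn.1 hv
      by_contra hvτ
      exact hW v (mem_sdiff.2 ⟨hvσ, hvτ⟩) hwv
    · exact mem_neighborsIn.2 ⟨hτσ hv, fun h => hwτ (h ▸ hv),
        hC.2 _ hins _ (insert_subset_insert _ (singleton_subset_iff.2 hv))⟩
  · rintro ⟨hwσ, rfl⟩
    refine ⟨⟨fun h => hwσ (neighborsIn_subset h), insert_neighborsIn_mem hF hC hσ hτ⟩,
      fun u hu hwu => ?_⟩
    exact (mem_sdiff.1 hu).2 (mem_neighborsIn.2 ⟨(mem_sdiff.1 hu).1,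
      fun h => hwσ (h ▸ (mem_sdiff.1 hu).1), hwu⟩)

lemma bNum_eq_card_filter (hF : IsFlag Δ) (hC : IsComplex Δ) (hσ : σ ∈ Δ) {k : ℕ} (hk : 1 ≤ k) :
    bNum Δ σ k = ((verts Δ \ σ).filter fun w => (neighborsIn Δ σ w).card = k).card := by
  rw [card_eq_sum_card_fiberwise (f := neighborsIn Δ σ) (t := σ.powersetCard k)
    fun w hw => mem_powersetCard.2 ⟨neighborsIn_subset, (mem_filter.1 hw).2⟩]
  refine sum_congr rfl fun τ hτ => congrArg card (ext fun w => ?_)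
  obtain ⟨hτσ, hτk⟩ := mem_powersetCard.1 hτ
  have hτ : τ.Nonempty := card_pos.1 (by omega)
  simp only [mem_Wset_iff hF hC hσ hτσ hτ, mem_filter, mem_sdiff]
  constructor
  · rintro ⟨hwσ, rfl⟩
    obtain ⟨v, hv⟩ := hτ
    exact ⟨⟨⟨mem_verts.2 ⟨_, (mem_neighborsIn.1 hv).2.2, by simp⟩, hwσ⟩, hτk⟩, rfl⟩
  · rintro ⟨⟨⟨-, hwσ⟩, -⟩, hN⟩
    exact ⟨hwσ, hN⟩

lemma card_verts_link (hC : IsComplex Δ) (τ : Finset V) :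
    (verts (link Δ τ)).card = (Δ.filter fun ρ => ρ.card = τ.card + 1 ∧ τ ⊆ ρ).card := by
  refine card_bij (fun w _ => insert w τ) (fun w hw => ?_) (fun a ha b hb h => ?_)
    fun ρ hρ => ?_
  · obtain ⟨hwτ, hins⟩ := (mem_verts_link hC).1 hw
    exact mem_filter.2 ⟨hins, card_insert_of_notMem hwτ, subset_insert _ _⟩
  · have ha' := ((mem_verts_link hC).1 ha).1
    have : a ∈ insert b τ := h ▸ mem_insert_self a τ
    exact (mem_insert.1 this).resolve_right ha'
  · obtain ⟨hρ, hcard, hτρ⟩ := mem_filter.1 hρ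
    obtain ⟨w, hwτ, rfl⟩ := exists_eq_insert_iff.2 ⟨hτρ, hcard.symm⟩
    exact ⟨w, (mem_verts_link hC).2 ⟨hwτ, hρ⟩, rfl⟩

lemma Wset_insert_eq_erase {u : V} (hF : IsFlag Δ) (hC : IsComplex Δ) (hσ : IsFacet Δ (insert u τ))
    (huτ : u ∉ τ) : Wset Δ (insert u τ) τ = (verts (link Δ τ)).erase u := by
  ext x
  rw [Wset, mem_filter, mem_erase, insert_sdiff_of_notMem _ huτ,
    Finset.sdiff_self, insert_empty_eq]
  simp only [mem_singleton, forall_eq]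
  constructor
  · rintro ⟨hx, hxu⟩
    refine ⟨fun h => hxu ?_, hx⟩
    rw [h, pair_eq_singleton]
    exact hC.2 _ hσ.1 _ (by simp)
  rintro ⟨hxu, hx⟩
  refine ⟨hx, fun hxuΔ => ?_⟩
  obtain ⟨hxτ, hins⟩ := (mem_verts_link hC).1 hx
  have hpairs : ∀ v ∈ insert u τ, ({x, v} : Finset V) ∈ Δ := by
    refine (forall_mem_insert _ _ _).2 ⟨hxuΔ, fun v hv => ?_⟩
    exact hC.2 _ hins _ (insert_subset_insert _ (singleton_subset_iff.2 hv))
  have hxσ := hσ.2 _ (hF.insert_mem hC hσ.1 (hC.2 _ hins _ (by simp)) hpairs)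
    (subset_insert _ _) ▸ mem_insert_self x (insert u τ)
  rcases mem_insert.1 hxσ with h | h
  · exact hxu h
  · exact hxτ h

lemma card_Wset_of_card_add_one {d : ℕ} (hF : IsFlag Δ) (hP : IsPseudomanifold Δ d)
    (hσ : IsFacet Δ σ) (hτσ : τ ⊆ σ) (hτ : τ.card + 1 = σ.card) : (Wset Δ σ τ).card = 1 := by
  obtain ⟨hC, hpure, hridge⟩ := hP
  obtain ⟨u, huτ, rfl⟩ := exists_eq_insert_iff.2 ⟨hτσ, hτ⟩
  have hσd := hpure _ hσ
  have hlink : (verts (link Δ τ)).card = 2 := by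
    rw [card_verts_link hC, hτ, hσd]
    exact hridge τ (hC.2 _ hσ.1 _ hτσ) (by omega)
  rw [Wset_insert_eq_erase hF hC hσ huτ, card_erase_of_mem ((mem_verts_link hC).2 ⟨huτ, hσ.1⟩),
    hlink]

lemma bNum_sub_one {d : ℕ} (hF : IsFlag Δ) (hP : IsPseudomanifold Δ d) (hσ : IsFacet Δ σ)
    (hd : 1 ≤ d) : bNum Δ σ (d - 1) = d := by
  have hσd := hP.2.1 σ hσ
  rw [bNum, sum_congr rfl fun τ hτ => card_Wset_of_card_add_one hF hP hσ
    (mem_powersetCard.1 hτ).1 (by rw [(mem_powersetCard.1 hτ).2]; omega),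
    ← card_eq_sum_ones, card_powersetCard, hσd, Nat.choose_symm hd, Nat.choose_one_right]

lemma sum_filter_le_card_neighborsIn (hF : IsFlag Δ) (hC : IsComplex Δ) (hσ : IsFacet Δ σ) {k : ℕ}
    (hk : 1 ≤ k) (f : ℕ → ℕ) :
    ∑ w ∈ (verts Δ \ σ).filter (fun w => k ≤ (neighborsIn Δ σ w).card), f (neighborsIn Δ σ w).card =
      ∑ j ∈ Finset.Icc k (σ.card - 1), f j * bNum Δ σ j := by
  rw [← sum_fiberwise_of_maps_to' (t := Finset.Icc k (σ.card - 1)) (fun w hw => ?_)]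
  · refine sum_congr rfl fun j hj => ?_
    rw [sum_const, smul_eq_mul, mul_comm, filter_filter,
      bNum_eq_card_filter hF hC hσ.1 (by simp at hj; omega)]
    congr 2
    ext w
    simp only [mem_filter, mem_Icc] at hj ⊢
    exact and_congr_right fun _ => ⟨fun h => h.2, fun h => ⟨h ▸ hj.1, h⟩⟩
  · simp only [mem_filter, mem_sdiff] at hw
    have := card_neighborsIn_lt hF hC hσ hw.1.2 (card_pos.1 (by omega))
    simp only [mem_Icc]
    omega

lemma biUnion_powersetCard_verts_link (hF : IsFlag Δ) (hC : IsComplex Δ) (hσ : σ ∈ Δ) {k : ℕ}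
    (hk : 1 ≤ k) (hkσ : k < σ.card) :
    (σ.powersetCard k).biUnion (fun δ => verts (link Δ δ)) =
      σ ∪ (verts Δ \ σ).filter fun w => k ≤ (neighborsIn Δ σ w).card := by
  ext w
  simp only [mem_biUnion, mem_union, mem_filter, mem_sdiff,
    mem_powersetCard, mem_verts_link hC]
  constructor
  · rintro ⟨δ, ⟨hδσ, rfl⟩, hwδ, hins⟩
    refine or_iff_not_imp_left.2 fun hwσ => ⟨⟨mem_verts.2 ⟨_, hins, mem_insert_self w δ⟩,
      hwσ⟩, card_le_card fun v hv => ?_⟩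
    exact mem_neighborsIn.2 ⟨hδσ hv, fun h => hwδ (h ▸ hv),
      hC.2 _ hins _ (insert_subset_insert _ (singleton_subset_iff.2 hv))⟩
  · rintro (hwσ | ⟨⟨-, hwσ⟩, hkN⟩)
    · obtain ⟨δ, hδ, hδk⟩ := exists_subset_card_eq (s := σ.erase w) (n := k)
        (by rw [card_erase_of_mem hwσ]; omega)
      exact ⟨δ, ⟨hδ.trans (erase_subset w σ), hδk⟩, fun h => by simpa using hδ h,
        hC.2 σ hσ _ (insert_subset hwσ (hδ.trans (erase_subset w σ)))⟩
    · obtain ⟨δ, hδ, hδk⟩ := exists_subset_card_eq hkN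
      exact ⟨δ, ⟨hδ.trans neighborsIn_subset, hδk⟩, fun h => hwσ (neighborsIn_subset (hδ h)),
        hC.2 _ (insert_neighborsIn_mem hF hC hσ (card_pos.1 (by omega))) _
          (insert_subset_insert w hδ)⟩

lemma card_biUnion_powersetCard_verts_link (hF : IsFlag Δ) (hC : IsComplex Δ) (hσ : IsFacet Δ σ)
    {k : ℕ} (hk : 1 ≤ k) (hkσ : k < σ.card) :
    ((σ.powersetCard k).biUnion fun δ => verts (link Δ δ)).card =
      σ.card + ∑ j ∈ Finset.Icc k (σ.card - 1), bNum Δ σ j := by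
  rw [biUnion_powersetCard_verts_link hF hC hσ.1 hk hkσ, card_union_of_disjoint
    (disjoint_sdiff.mono_right (filter_subset _ _)), add_right_inj]
  simpa using sum_filter_le_card_neighborsIn hF hC hσ hk fun _ => 1

lemma sum_fNum_link_singleton_eq_sum_card_neighborsIn (hC : IsComplex Δ) (σ : Finset V) :
    ∑ v ∈ σ, fNum (link Δ {v}) 0 = ∑ w ∈ verts Δ, (neighborsIn Δ σ w).card := by
  simp only [fNum_link_zero hC]
  convert sum_card_bipartiteAbove_eq_sum_card_bipartiteBelow (s := σ) (t := verts Δ)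
    (r := fun v w => w ∈ verts (link Δ {v})) using 3 with v - w -
  · exact (inter_eq_right.2 (sup_mono (filter_subset _ _))).symm.trans
      (filter_mem_eq_inter).symm
  · ext v
    simp [bipartiteBelow, mem_verts_link hC, ne_comm]

lemma sum_card_neighborsIn (hF : IsFlag Δ) (hC : IsComplex Δ) (hσ : IsFacet Δ σ) :
    ∑ w ∈ verts Δ, (neighborsIn Δ σ w).card =
      σ.card * (σ.card - 1) + ∑ j ∈ Finset.Icc 1 (σ.card - 1), j * bNum Δ σ j := by
  have hσV : σ ⊆ verts Δ := fun w hw => mem_verts.2 ⟨σ, hσ.1, hw⟩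
  have houter := sum_filter_le_card_neighborsIn hF hC hσ le_rfl fun j => j
  rw [sum_filter_of_ne fun w _ h => by omega] at houter
  rw [← sum_sdiff hσV, add_comm, sum_congr rfl fun w hw => by
    rw [neighborsIn_of_mem hC hσ.1 hw, card_erase_of_mem hw], sum_const, smul_eq_mul,
    houter]

lemma sum_Icc_one_mul (n : ℕ) (f : ℕ → ℕ) :
    ∑ j ∈ Finset.Icc 1 n, j * f j =
      ∑ j ∈ Finset.Icc 1 n, f j + ∑ j ∈ Finset.Icc 2 n, (j - 1) * f j := by
  rw [sum_subset (Finset.Icc_subset_Icc_left one_le_two) fun j hj hj2 => by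
    simp only [mem_Icc] at hj hj2
    rw [show j = 1 by omega, Nat.sub_self, zero_mul], ← sum_add_distrib]
  refine sum_congr rfl fun j hj => ?_
  obtain ⟨i, rfl⟩ : ∃ i, j = i + 1 := ⟨j - 1, by simp at hj; omega⟩
  simp only [Nat.add_sub_cancel]
  ring

theorem sum_fNum_link_singleton_eq {d : ℕ} (hF : IsFlag Δ) (hP : IsPseudomanifold Δ d)
    (hσ : IsFacet Δ σ) (hd : 3 ≤ d) :
    ∑ v ∈ σ, fNum (link Δ {v}) 0 =
      (σ.biUnion fun v => verts (link Δ {v})).card + 2 * d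
        + (d - 3) * ((σ.powersetCard (d - 2)).biUnion fun δ => verts (link Δ δ)).card
        + ∑ i ∈ Finset.Icc 2 (d - 3), (i - 1) * bNum Δ σ i := by
  have hC := hP.1
  have hσd := hP.2.1 σ hσ
  have hvert : σ.biUnion (fun v => verts (link Δ {v})) =
      (σ.powersetCard 1).biUnion fun δ => verts (link Δ δ) := by
    rw [powersetCard_one, map_eq_image, image_biUnion]
    rfl
  rw [sum_fNum_link_singleton_eq_sum_card_neighborsIn hC, sum_card_neighborsIn hF hC hσ, hvert,
    card_biUnion_powersetCard_verts_link hF hC hσ le_rfl (by omega),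
    card_biUnion_powersetCard_verts_link hF hC hσ (by omega) (by omega), hσd]
  have hb := bNum_sub_one hF hP hσ (by omega)
  obtain ⟨n, rfl⟩ : ∃ n, d = n + 3 := ⟨d - 3, by omega⟩
  simp only [show n + 3 - 1 = n + 2 by omega, show n + 3 - 2 = n + 1 by omega,
    Nat.add_sub_cancel] at hb ⊢
  have htop (f : ℕ → ℕ) (a : ℕ) (ha : a ≤ n + 1) :
      ∑ j ∈ Finset.Icc a (n + 2), f j = ∑ j ∈ Finset.Icc a n, f j + f (n + 1) + f (n + 2) := by
    rw [sum_Icc_succ_top (b := n + 1) (by omega), sum_Icc_succ_top (by omega)]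
  rw [htop _ 1 (by omega), htop _ 1 (by omega), htop _ (n + 1) le_rfl,
    Finset.Icc_eq_empty_of_lt (Nat.lt_succ_self n), sum_empty, sum_Icc_one_mul, hb]
  ring

end

/-- Let `m ≥ 2`, let `Δ` be a flag `(2m-1)`-dimensional
pseudomanifold and `σ` a facet.  Then `Σ_{v ∈ σ} f₀(lk({v},Δ))
= |∪_{v ∈ σ} V(lk({v},Δ))| + 4m
  + (2m-3)·|∪_{δ ⊆ σ, |δ| = 2m-2} V(lk(δ,Δ))| + Σ_{i=2}^{2m-3} (i-1)·b_i`. -/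
theorem sum_of_vertex_links_formula (m : ℕ) (hm : 2 ≤ m) (Δ : Finset (Finset V))
    (hF : IsFlag Δ) (hP : IsPseudomanifold Δ (2 * m)) (σ : Finset V)
    (hσ : IsFacet Δ σ) :
    ∑ v ∈ σ, fNum (link Δ {v}) 0 =
      (σ.biUnion fun v => verts (link Δ {v})).card + 4 * m
        + (2 * m - 3) *
            ((σ.powersetCard (2 * m - 2)).biUnion fun δ => verts (link Δ δ)).card
        + ∑ i ∈ Finset.Icc 2 (2 * m - 3), (i - 1) * bNum Δ σ i := by
  rw [show 4 * m = 2 * (2 * m) by ring]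
  exact sum_fNum_link_singleton_eq hF hP hσ (by omega)
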